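/- If x*(t) is a T-periodic solution of the uncontrolled T-periodic system ẋ = A(t)x with x*(0) ≠ 0, then the monodromy matrix Λ of the act-and-wait closed-loop system satisfies Λ x*(0) = x*(0); that is, 1 is an eigenvalue of Λ with eigenvector x*(0). -/

import Mathlib

attribute [local instance] Matrix.normedAddCommGroup Matrix.normedSpace

/-!
Along `x*` the act-and-wait feedback `B(t)F(x(t) − x(t − T))` vanishes, so on `[T, 2T]` the
periodic solution `x*` solves `ẋ = (A − BF)x + BF x*`. Variation of constants with the
transition matrix `Υ` of `A − BF` gives
`x*(2T) = Υ(2T,T) x*(T) + ∫_T^{2T} Υ(2T,s) B(s) F x*(s) ds`.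
By periodicity of `A − BF` and uniqueness of solutions, `Υ(2T,T) = Υ(T,0)`; and
`Φ(s − T, 0) x*(0) = x*(s − T) = x*(s)`. Hence the right-hand side is `Λ x*(0)`, while
`x*(2T) = x*(0)`.
-/

open Set MeasureTheory Matrix

theorem linearODE_solution_unique {E : Type*} [NormedAddCommGroup E] [NormedSpace ℝ E]
    {M : ℝ → E →L[ℝ] E} {c f g : ℝ → E} {a b : ℝ} (hM : ContinuousOn M (Icc a b))
    (hf : ∀ t ∈ Icc a b, HasDerivAt f (M t (f t) + c t) t)
    (hg : ∀ t ∈ Icc a b, HasDerivAt g (M t (g t) + c t) t) (ha : f a = g a) :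
    EqOn f g (Icc a b) := by
  rcases (Icc a b).eq_empty_or_nonempty with hempty | hne
  · simp [hempty]
  obtain ⟨t₀, -, hmax⟩ := isCompact_Icc.exists_isMaxOn hne (continuous_nnnorm.comp_continuousOn hM)
  have hlip : ∀ t ∈ Ico a b, LipschitzOnWith ‖M t₀‖₊ (fun y => M t y + c t) univ := by
    intro t ht
    refine LipschitzWith.lipschitzOnWith (LipschitzWith.of_dist_le_mul fun y z => ?_)
    rw [dist_add_right]
    exact ((M t).lipschitz.weaken (hmax (Ico_subset_Icc_self ht))).dist_le_mul y z
  have hcont : ∀ {h : ℝ → E}, (∀ t ∈ Icc a b, HasDerivAt h (M t (h t) + c t) t) →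
      ContinuousOn h (Icc a b) := fun hh t ht => (hh t ht).continuousAt.continuousWithinAt
  exact ODE_solution_unique_of_mem_Icc_right hlip (hcont hf)
    (fun t ht => (hf t (Ico_subset_Icc_self ht)).hasDerivWithinAt) (fun _ _ => mem_univ _)
    (hcont hg) (fun t ht => (hg t (Ico_subset_Icc_self ht)).hasDerivWithinAt)
    (fun _ _ => mem_univ _) ha

section MatrixCalculus

variable {ι κ : Type*} [Fintype ι] [Fintype κ]

noncomputable def Matrix.mulVecL : Matrix ι κ ℝ →L[ℝ] (κ → ℝ) →L[ℝ] (ι → ℝ) :=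
  (Matrix.mulVecBilin ℝ ℝ).toContinuousBilinearMap

theorem HasDerivAt.matrix_mulVec {f : ℝ → Matrix ι κ ℝ} {g : ℝ → κ → ℝ} {f' : Matrix ι κ ℝ}
    {g' : κ → ℝ} {t : ℝ} (hf : HasDerivAt f f' t) (hg : HasDerivAt g g' t) :
    HasDerivAt (fun τ => f τ *ᵥ g τ) (f t *ᵥ g' + f' *ᵥ g t) t :=
  mulVecL.hasDerivAt_of_bilinear (fun _ => hf) (fun _ => hg)

theorem intervalIntegral.integral_mulVec {N : ℝ → Matrix ι κ ℝ} (hN : Continuous N)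
    (a b : ℝ) (x : κ → ℝ) : (∫ s in a..b, N s) *ᵥ x = ∫ s in a..b, N s *ᵥ x :=
  (((mulVecL : Matrix ι κ ℝ →L[ℝ] _).flip x).intervalIntegral_comp_comm
    (hN.intervalIntegrable a b)).symm

theorem intervalIntegral.mulVec_integral {w : ℝ → κ → ℝ} {a b : ℝ}
    (hw : IntervalIntegrable w volume a b) (N : Matrix ι κ ℝ) :
    N *ᵥ ∫ s in a..b, w s = ∫ s in a..b, N *ᵥ w s :=
  ((mulVecL N).intervalIntegral_comp_comm hw).symm

theorem mulVec_ODE_solution_unique {M : ℝ → Matrix ι ι ℝ} {c f g : ℝ → ι → ℝ} {a b : ℝ}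
    (hM : ContinuousOn M (Icc a b)) (hf : ∀ t ∈ Icc a b, HasDerivAt f (M t *ᵥ f t + c t) t)
    (hg : ∀ t ∈ Icc a b, HasDerivAt g (M t *ᵥ g t + c t) t) (ha : f a = g a) :
    EqOn f g (Icc a b) :=
  linearODE_solution_unique (mulVecL.continuous.comp_continuousOn hM) hf hg ha

end MatrixCalculus

section TransitionMatrix

variable {ι : Type*} [Fintype ι] {M : ℝ → Matrix ι ι ℝ} {Υ : ℝ → ℝ → Matrix ι ι ℝ}

theorem hasDerivAt_transition_mulVec
    (hΥode : ∀ s t, HasDerivAt (fun τ => Υ τ s) (M t * Υ t s) t) (s t : ℝ) (x : ι → ℝ) :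
    HasDerivAt (fun τ => Υ τ s *ᵥ x) (M t *ᵥ (Υ t s *ᵥ x)) t := by
  simpa [← mulVec_mulVec] using (hΥode s t).matrix_mulVec (hasDerivAt_const t x)

theorem transition_add_period_mulVec [DecidableEq ι] {T s t : ℝ} (hst : s ≤ t)
    (hM : ContinuousOn M (Icc s t)) (hMper : ∀ τ, M (τ + T) = M τ) (hΥinit : ∀ s, Υ s s = 1)
    (hΥode : ∀ s t, HasDerivAt (fun τ => Υ τ s) (M t * Υ t s) t) (x : ι → ℝ) :
    Υ (t + T) (s + T) *ᵥ x = Υ t s *ᵥ x := by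
  refine mulVec_ODE_solution_unique (c := 0) (f := fun τ => Υ (τ + T) (s + T) *ᵥ x)
    (g := fun τ => Υ τ s *ᵥ x) hM (fun τ _ => ?_)
    (fun τ _ => by simpa using hasDerivAt_transition_mulVec hΥode s τ x) (by simp [hΥinit])
    ⟨hst, le_rfl⟩
  simpa [hMper] using (hasDerivAt_transition_mulVec hΥode (s + T) (τ + T) x).comp_add_const τ T

theorem mulVec_ODE_variation_of_constants [DecidableEq ι] {a b : ℝ} (hab : a ≤ b)
    (hM : ContinuousOn M (Icc a b)) (hΥinit : ∀ s, Υ s s = 1)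
    (hΥode : ∀ s t, HasDerivAt (fun τ => Υ τ s) (M t * Υ t s) t)
    (hΥcocycle : ∀ t s r, Υ t s * Υ s r = Υ t r) (hΥa : Continuous (Υ a)) {f x : ℝ → ι → ℝ}
    (hf : Continuous f) (hx : ∀ t ∈ Icc a b, HasDerivAt x (M t *ᵥ x t + f t) t) :
    x b = Υ b a *ᵥ x a + ∫ s in a..b, Υ b s *ᵥ f s := by
  have hw : Continuous fun s => Υ a s *ᵥ f s := hΥa.matrix_mulVec hf
  set v : ℝ → ι → ℝ := fun t => Υ t a *ᵥ (x a + ∫ s in a..t, Υ a s *ᵥ f s) with hv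
  have hv' : ∀ t, HasDerivAt v (M t *ᵥ v t + f t) t := fun t => by
    convert (hΥode a t).matrix_mulVec
      ((hw.integral_hasStrictDerivAt a t).hasDerivAt.const_add (x a)) using 1
    rw [mulVec_mulVec, mulVec_mulVec, hΥcocycle, hΥinit, one_mulVec, add_comm]
  have hxv : x b = v b :=
    mulVec_ODE_solution_unique hM hx (fun t _ => hv' t) (by simp [hv, hΥinit]) ⟨hab, le_rfl⟩
  rw [hxv]
  simp only [hv, mulVec_add, intervalIntegral.mulVec_integral (hw.intervalIntegrable a b),
    mulVec_mulVec, hΥcocycle]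

end TransitionMatrix

theorem stmt5_general {n m : ℕ} (T : ℝ) (hT : 0 < T)
    (A : ℝ → Matrix (Fin n) (Fin n) ℝ) (hAcont : Continuous A) (hAper : ∀ t, A (t + T) = A t)
    (B : ℝ → Matrix (Fin n) (Fin m) ℝ) (hBcont : Continuous B) (hBper : ∀ t, B (t + T) = B t)
    (F : Matrix (Fin m) (Fin n) ℝ)
    -- state-transition matrix of ẋ = A(t)x
    (Φ : ℝ → ℝ → Matrix (Fin n) (Fin n) ℝ)
    (hΦcont : Continuous fun p : ℝ × ℝ => Φ p.1 p.2)
    -- state-transition matrix of ẋ = (A(t) − B(t)F)x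
    (Υ : ℝ → ℝ → Matrix (Fin n) (Fin n) ℝ)
    (hΥcont : Continuous fun p : ℝ × ℝ => Υ p.1 p.2)
    (hΥinit : ∀ s, Υ s s = 1)
    (hΥode : ∀ s t, HasDerivAt (fun τ => Υ τ s) ((A t - B t * F) * Υ t s) t)
    (hΥcocycle : ∀ t s r, Υ t s * Υ s r = Υ t r)
    -- x* is a T-periodic solution of the uncontrolled system, propagated by Φ
    (xs : ℝ → (Fin n → ℝ))
    (hxsode : ∀ t, HasDerivAt xs ((A t).mulVec (xs t)) t)
    (hxsper : ∀ t, xs (t + T) = xs t)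
    (hxsΦ : ∀ t s, xs t = (Φ t s).mulVec (xs s)) :
    (Υ T 0 * Φ T 0 +
        ∫ s in T..(2 * T), Υ (2 * T) s * B s * F * Φ (s - T) 0).mulVec (xs 0) =
      xs 0 := by
  set M : ℝ → Matrix (Fin n) (Fin n) ℝ := fun t => A t - B t * F with hM
  have hMcont : Continuous M := hAcont.sub (hBcont.matrix_mul continuous_const)
  have hΥr : ∀ r, Continuous (Υ r) := fun r => hΥcont.comp (continuous_const.prodMk continuous_id)
  have hxscont : Continuous xs := continuous_iff_continuousAt.2 fun t => (hxsode t).continuousAt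
  have hxsT : xs T = xs 0 := by simpa using hxsper 0
  have hshift : Υ (2 * T) T *ᵥ xs 0 = Υ T 0 *ᵥ xs 0 := by
    simpa [two_mul] using transition_add_period_mulVec hT.le hMcont.continuousOn
      (fun t => by simp [hM, hAper, hBper]) hΥinit hΥode (xs 0)
  have hvoc : xs (2 * T) =
      Υ (2 * T) T *ᵥ xs T + ∫ s in T..(2 * T), Υ (2 * T) s *ᵥ (B s * F) *ᵥ xs s :=
    mulVec_ODE_variation_of_constants (by linarith) hMcont.continuousOn hΥinit hΥode hΥcocycle
      (hΥr T) ((hBcont.matrix_mul continuous_const).matrix_mulVec hxscont)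
      (fun t _ => by simpa [hM, sub_mulVec] using hxsode t)
  have hΦ : ∀ s, Φ (s - T) 0 *ᵥ xs 0 = xs s := fun s => by
    rw [← hxsΦ, ← hxsper, sub_add_cancel]
  have hG : Continuous fun s => Υ (2 * T) s * B s * F * Φ (s - T) 0 :=
    (((hΥr _).matrix_mul hBcont).matrix_mul continuous_const).matrix_mul
      (hΦcont.comp ((continuous_id.sub continuous_const).prodMk continuous_const))
  calc (Υ T 0 * Φ T 0 + ∫ s in T..(2 * T), Υ (2 * T) s * B s * F * Φ (s - T) 0) *ᵥ xs 0
      = Υ T 0 *ᵥ xs 0 + ∫ s in T..(2 * T), Υ (2 * T) s *ᵥ ((B s * F) *ᵥ xs s) := by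
        rw [add_mulVec, ← mulVec_mulVec, ← hxsΦ, hxsT, intervalIntegral.integral_mulVec hG]
        simp only [← mulVec_mulVec, hΦ]
    _ = xs (2 * T) := by rw [hvoc, hxsT, hshift]
    _ = xs 0 := by rw [two_mul, hxsper, hxsT]

/-- if `x*` is a `T`-periodic solution of the uncontrolled system `ẋ = A(t)x`
with `x*(0) ≠ 0`, then the act-and-wait monodromy matrix
`Λ = Υ(T,0)Φ(T,0) + ∫_T^{2T} Υ(2T,s)B(s)FΦ(s−T,0) ds` satisfies `Λ x*(0) = x*(0)`,
i.e. `1` is an eigenvalue of `Λ` with eigenvector `x*(0)`. -/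
theorem stmt5 {n m : ℕ} (T : ℝ) (hT : 0 < T)
    (A : ℝ → Matrix (Fin n) (Fin n) ℝ) (hAcont : Continuous A) (hAper : ∀ t, A (t + T) = A t)
    (B : ℝ → Matrix (Fin n) (Fin m) ℝ) (hBcont : Continuous B) (hBper : ∀ t, B (t + T) = B t)
    (F : Matrix (Fin m) (Fin n) ℝ)
    -- state-transition matrix of ẋ = A(t)x
    (Φ : ℝ → ℝ → Matrix (Fin n) (Fin n) ℝ)
    (hΦcont : Continuous fun p : ℝ × ℝ => Φ p.1 p.2)
    (hΦinit : ∀ s, Φ s s = 1)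
    (hΦode : ∀ s t, HasDerivAt (fun τ => Φ τ s) (A t * Φ t s) t)
    (hΦcocycle : ∀ t s r, Φ t s * Φ s r = Φ t r)
    -- state-transition matrix of ẋ = (A(t) − B(t)F)x
    (Υ : ℝ → ℝ → Matrix (Fin n) (Fin n) ℝ)
    (hΥcont : Continuous fun p : ℝ × ℝ => Υ p.1 p.2)
    (hΥinit : ∀ s, Υ s s = 1)
    (hΥode : ∀ s t, HasDerivAt (fun τ => Υ τ s) ((A t - B t * F) * Υ t s) t)
    (hΥcocycle : ∀ t s r, Υ t s * Υ s r = Υ t r)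
    -- x* is a T-periodic solution of the uncontrolled system, propagated by Φ
    (xs : ℝ → (Fin n → ℝ))
    (hxsode : ∀ t, HasDerivAt xs ((A t).mulVec (xs t)) t)
    (hxsper : ∀ t, xs (t + T) = xs t)
    (hxsΦ : ∀ t s, xs t = (Φ t s).mulVec (xs s))
    (hxs0 : xs 0 ≠ 0) :
    (Υ T 0 * Φ T 0 +
        ∫ s in T..(2 * T), Υ (2 * T) s * B s * F * Φ (s - T) 0).mulVec (xs 0) =
      xs 0 :=
  stmt5_general T hT A hAcont hAper B hBcont hBper F Φ hΦcont Υ hΥcont hΥinit hΥode hΥcocycle xs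
    hxsode hxsper hxsΦ
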